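/- arXiv:1707.01569 — 7 statements merged into one kernel-verified Lean document; each statement's English description precedes it below -/
import Mathlib

section
/- Let f = h + conj(g) be a sense-preserving harmonic mapping in the unit disk D with dilatation ω = g'/h'. Then for every ε in the closed unit disk and every z in D, the pre-Schwarzian derivatives satisfy P_{h+εg}(z) - P_f(z) = ((ε + conj(ω(z)))/(1 + ε ω(z))) · (ω'(z)/(1 - |ω(z)|²)). -/
open Complex Metric

/-- Pre-Schwarzian derivative of an analytic function. -/
noncomputable def pd (F : ℂ → ℂ) (z : ℂ) : ℂ := deriv (deriv F) z / deriv F z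

/-- Dilatation of the harmonic mapping `h + conj g`. -/
noncomputable def dil (h g : ℂ → ℂ) (z : ℂ) : ℂ := deriv g z / deriv h z

/-- Pre-Schwarzian derivative of the harmonic mapping `h + conj g`. -/
noncomputable def PH (h g : ℂ → ℂ) (z : ℂ) : ℂ :=
  pd h z - (starRingEnd ℂ) (dil h g z) * deriv (dil h g) z / ((1 - ‖dil h g z‖ ^ 2 : ℝ) : ℂ)

/-- Pre-Schwarzian norm. -/
noncomputable def pnorm (P : ℂ → ℂ) : ℝ :=
  ⨆ z : Metric.ball (0 : ℂ) 1, (1 - ‖(z : ℂ)‖ ^ 2) * ‖P (z : ℂ)‖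

/-- The range whose boundedness expresses finiteness of the pre-Schwarzian norm. -/
def pbdd (P : ℂ → ℂ) : Prop :=
  BddAbove (Set.range fun z : Metric.ball (0 : ℂ) 1 => (1 - ‖(z : ℂ)‖ ^ 2) * ‖P (z : ℂ)‖)

/-- `h + conj g` is a sense-preserving harmonic mapping in the unit disk. -/
def SPH (h g : ℂ → ℂ) : Prop :=
  DifferentiableOn ℂ h (Metric.ball (0 : ℂ) 1) ∧
  DifferentiableOn ℂ g (Metric.ball (0 : ℂ) 1) ∧ g 0 = 0 ∧
  ∀ z ∈ Metric.ball (0 : ℂ) 1, ‖deriv g z‖ < ‖deriv h z‖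

/-- `P_{h+εg} = P_h + ε ω' / (1 + ε ω)`: differentiate `(h + ε g)' = h' (1 + ε ω)` logarithmically. -/
theorem pd_add_const_mul {h g : ℂ → ℂ} {z : ℂ} (hh : AnalyticAt ℂ h z) (hg : AnalyticAt ℂ g z)
    (hh' : deriv h z ≠ 0) {ε : ℂ} (hε : 1 + ε * dil h g z ≠ 0) :
    pd (fun w => h w + ε * g w) z = pd h z + ε * deriv (dil h g) z / (1 + ε * dil h g z) := by
  have hderiv : deriv (fun w => h w + ε * g w) =ᶠ[nhds z] fun w => deriv h w + ε * deriv g w := by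
    filter_upwards [hh.eventually_analyticAt, hg.eventually_analyticAt] with w hhw hgw
    exact (hhw.differentiableAt.hasDerivAt.add
      (hgw.differentiableAt.hasDerivAt.const_mul ε)).deriv
  have hh2 := hh.deriv.differentiableAt
  have hg2 := hg.deriv.differentiableAt
  have hsecond : deriv (deriv (fun w => h w + ε * g w)) z
      = deriv (deriv h) z + ε * deriv (deriv g) z := by
    rw [hderiv.deriv_eq]
    exact (hh2.hasDerivAt.add (hg2.hasDerivAt.const_mul ε)).deriv
  have hdil : deriv (dil h g) z
      = (deriv (deriv g) z * deriv h z - deriv g z * deriv (deriv h) z) / deriv h z ^ 2 :=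
    deriv_div hg2 hh2 hh'
  have hsum : deriv h z + ε * deriv g z ≠ 0 := by
    rw [show deriv h z + ε * deriv g z = deriv h z * (1 + ε * dil h g z) by
      rw [dil]; field_simp]
    exact mul_ne_zero hh' hε
  rw [pd, pd, hsecond, hderiv.eq_of_nhds, hdil]
  rw [dil] at hε ⊢
  field_simp
  ring

theorem one_add_mul_ne_zero_of_norm_le_one {𝕜 : Type*} [NormedRing 𝕜] [NormOneClass 𝕜]
    {ε ω : 𝕜} (hε : ‖ε‖ ≤ 1) (hω : ‖ω‖ < 1) : 1 + ε * ω ≠ 0 := by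
  intro h0
  have hlt : ‖ε * ω‖ < 1 := calc
    ‖ε * ω‖ ≤ ‖ε‖ * ‖ω‖ := norm_mul_le ε ω
    _ ≤ 1 * ‖ω‖ := by gcongr
    _ < 1 := by rwa [one_mul]
  rw [eq_neg_of_add_eq_zero_right h0, norm_neg, norm_one] at hlt
  exact hlt.false

theorem norm_dil_lt_one {h g : ℂ → ℂ} {z : ℂ} (hz : ‖deriv g z‖ < ‖deriv h z‖) :
    ‖dil h g z‖ < 1 := by
  rw [dil, norm_div]
  exact (div_lt_one ((norm_nonneg _).trans_lt hz)).mpr hz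

theorem ofReal_one_sub_norm_sq (ω : ℂ) :
    ((1 - ‖ω‖ ^ 2 : ℝ) : ℂ) = 1 - ω * (starRingEnd ℂ) ω := by
  push_cast
  rw [mul_conj']

theorem stmt0 (h g : ℂ → ℂ) (hf : SPH h g) :
    ∀ ε : ℂ, ‖ε‖ ≤ 1 → ∀ z ∈ Metric.ball (0 : ℂ) 1,
      pd (fun w => h w + ε * g w) z - PH h g z =
        ((ε + (starRingEnd ℂ) (dil h g z)) / (1 + ε * dil h g z)) *
          (deriv (dil h g) z / ((1 - ‖dil h g z‖ ^ 2 : ℝ) : ℂ)) := by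
  intro ε hε z hz
  obtain ⟨hh, hg, -, hsp⟩ := hf
  have hω : ‖dil h g z‖ < 1 := norm_dil_lt_one (hsp z hz)
  have hh' : deriv h z ≠ 0 := norm_pos_iff.mp ((norm_nonneg _).trans_lt (hsp z hz))
  have hεω : 1 + ε * dil h g z ≠ 0 := one_add_mul_ne_zero_of_norm_le_one hε hω
  have hωω : ((1 - ‖dil h g z‖ ^ 2 : ℝ) : ℂ) ≠ 0 := by
    rw [Ne, ofReal_eq_zero]
    nlinarith [norm_nonneg (dil h g z)]
  rw [pd_add_const_mul (hh.analyticAt (isOpen_ball.mem_nhds hz))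
    (hg.analyticAt (isOpen_ball.mem_nhds hz)) hh' hεω, PH]
  rw [ofReal_one_sub_norm_sq] at hωω ⊢
  generalize dil h g z = ω at *
  generalize (starRingEnd ℂ) ω = c at *
  -- `ε (1 - ω c) + c (1 + ε ω) = ε + c`
  field_simp
  ring
end

section
/- Let f = h + conj(g) be a sense-preserving harmonic mapping in the unit disk D. Then for every ε in the closed unit disk and every z in D, (1-|z|²)·| |P_{h+εg}(z)| - |P_f(z)| | ≤ 1. Consequently, if the pre-Schwarzian norm ||P_f|| = sup_{z∈D}(1-|z|²)|P_f(z)| is finite, then | ||P_{h+εg}|| - ||P_f|| | ≤ 1. -/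
open Complex Metric

/-!
Write `ω = g'/h'` for the dilatation. A direct computation gives
`P_{h+εg} - P_f = ω' (ε + conj ω) / ((1 + εω) (1 - |ω|²))`.
Since `|1 + εω|² - |ε + conj ω|² = (1 - |ε|²)(1 - |ω|²) ≥ 0`, we have `|ε + conj ω| ≤ |1 + εω|`,
and Schwarz–Pick for `ω : 𝔻 → 𝔻` bounds `(1 - |z|²)|ω'|` by `1 - |ω|²`.
Hence `(1 - |z|²)|P_{h+εg} - P_f| ≤ 1`; the reverse triangle inequality gives the pointwise claim,
and taking suprema gives the claim on the norms.
-/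

open ComplexConjugate Set Topology

noncomputable def mobius (a w : ℂ) : ℂ := (w + a) / (1 + conj a * w)

@[simp]
lemma mobius_zero (a : ℂ) : mobius a 0 = a := by simp [mobius]

lemma sq_norm_one_add_conj_mul_sub_sq_norm_add (a w : ℂ) :
    ‖1 + conj a * w‖ ^ 2 - ‖w + a‖ ^ 2 = (1 - ‖a‖ ^ 2) * (1 - ‖w‖ ^ 2) := by
  simp only [Complex.sq_norm, Complex.normSq_apply, Complex.add_re, Complex.add_im,
    Complex.mul_re, Complex.mul_im, Complex.one_re, Complex.one_im, Complex.conj_re,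
    Complex.conj_im]
  ring

lemma norm_add_le_norm_one_add_conj_mul {a w : ℂ} (ha : ‖a‖ ≤ 1) (hw : ‖w‖ ≤ 1) :
    ‖w + a‖ ≤ ‖1 + conj a * w‖ := by
  have key := sq_norm_one_add_conj_mul_sub_sq_norm_add a w
  have : 0 ≤ (1 - ‖a‖ ^ 2) * (1 - ‖w‖ ^ 2) := by
    apply mul_nonneg <;> nlinarith [norm_nonneg a, norm_nonneg w]
  exact le_of_pow_le_pow_left₀ two_ne_zero (norm_nonneg _) (by linarith)

lemma norm_add_lt_norm_one_add_conj_mul {a w : ℂ} (ha : ‖a‖ < 1) (hw : ‖w‖ < 1) :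
    ‖w + a‖ < ‖1 + conj a * w‖ := by
  have key := sq_norm_one_add_conj_mul_sub_sq_norm_add a w
  have : 0 < (1 - ‖a‖ ^ 2) * (1 - ‖w‖ ^ 2) := by
    apply mul_pos <;> nlinarith [norm_nonneg a, norm_nonneg w]
  exact lt_of_pow_lt_pow_left₀ 2 (norm_nonneg _) (by linarith)

lemma one_add_conj_mul_ne_zero {a w : ℂ} (ha : ‖a‖ ≤ 1) (hw : ‖w‖ < 1) :
    1 + conj a * w ≠ 0 := by
  intro h0
  have h1 : ‖conj a * w‖ = 1 := by rw [eq_neg_of_add_eq_zero_right h0, norm_neg, norm_one]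
  rw [norm_mul, RCLike.norm_conj] at h1
  nlinarith [norm_nonneg a, norm_nonneg w]

lemma mobius_mapsTo_ball {a : ℂ} (ha : ‖a‖ < 1) : MapsTo (mobius a) (ball 0 1) (ball 0 1) := by
  intro w hw
  rw [mem_ball_zero_iff] at hw ⊢
  rw [mobius, norm_div, div_lt_one (norm_pos_iff.mpr (one_add_conj_mul_ne_zero ha.le hw))]
  exact norm_add_lt_norm_one_add_conj_mul ha hw

lemma hasDerivAt_mobius {a w : ℂ} (ha : ‖a‖ < 1) (hw : ‖w‖ < 1) :
    HasDerivAt (mobius a) ((1 - ‖a‖ ^ 2 : ℂ) / (1 + conj a * w) ^ 2) w := by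
  have hnum : HasDerivAt (fun w => w + a) 1 w := (hasDerivAt_id w).add_const a
  have hden : HasDerivAt (fun w => 1 + conj a * w) (conj a) w := by
    simpa using ((hasDerivAt_id w).const_mul (conj a)).const_add 1
  refine (hnum.div hden (one_add_conj_mul_ne_zero ha.le hw)).congr_deriv ?_
  rw [← Complex.mul_conj']
  ring

lemma differentiableOn_mobius {a : ℂ} (ha : ‖a‖ < 1) :
    DifferentiableOn ℂ (mobius a) (ball 0 1) := fun _ hw =>
  (hasDerivAt_mobius ha (mem_ball_zero_iff.mp hw)).differentiableAt.differentiableWithinAt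

theorem one_sub_sq_norm_mul_norm_deriv_le_of_mapsTo_ball {ω : ℂ → ℂ}
    (hd : DifferentiableOn ℂ ω (ball 0 1))
    (hm : MapsTo ω (ball 0 1) (ball 0 1)) {a : ℂ} (ha : a ∈ ball (0 : ℂ) 1) :
    (1 - ‖a‖ ^ 2) * ‖deriv ω a‖ ≤ 1 - ‖ω a‖ ^ 2 := by
  set b := ω a
  have hb : ‖b‖ < 1 := mem_ball_zero_iff.mp (hm ha)
  have hωa : HasDerivAt ω (deriv ω a) (mobius a 0) := by
    rw [mobius_zero]
    exact (hd.differentiableAt (isOpen_ball.mem_nhds ha)).hasDerivAt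
  rw [mem_ball_zero_iff] at ha
  have hb' : ‖-b‖ < 1 := by rwa [norm_neg]
  set ψ := mobius (-b) ∘ ω ∘ mobius a
  have hψ0 : ψ 0 = 0 := by simp [ψ, b, mobius]
  have hψ : HasDerivAt ψ ((1 - ‖-b‖ ^ 2 : ℂ) / (1 + conj (-b) * b) ^ 2 *
      (deriv ω a * ((1 - ‖a‖ ^ 2 : ℂ) / (1 + conj a * 0) ^ 2))) 0 := by
    have hσ := hasDerivAt_mobius ha (w := 0) (by simp)
    have hτ : HasDerivAt (mobius (-b)) ((1 - ‖-b‖ ^ 2 : ℂ) / (1 + conj (-b) * b) ^ 2)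
        ((ω ∘ mobius a) 0) := by
      rw [Function.comp_apply, mobius_zero]
      exact hasDerivAt_mobius hb' hb
    exact hτ.comp 0 (hωa.comp 0 hσ)
  have hschwarz : ‖deriv ψ 0‖ ≤ 1 := by
    refine Complex.norm_deriv_le_one_of_mapsTo_ball ?_ ?_ one_pos
    · exact (differentiableOn_mobius hb').comp
        (hd.comp (differentiableOn_mobius ha) (mobius_mapsTo_ball ha))
        (hm.comp (mobius_mapsTo_ball ha))
    · rw [hψ0]
      exact ((mobius_mapsTo_ball hb').comp (hm.comp (mobius_mapsTo_ball ha))).mono_right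
        ball_subset_closedBall
  have hsa : 0 < 1 - ‖a‖ ^ 2 := by nlinarith [norm_nonneg a]
  have hsb : 0 < 1 - ‖b‖ ^ 2 := by nlinarith [norm_nonneg b]
  have hderiv : deriv ψ 0 = deriv ω a * (((1 - ‖a‖ ^ 2) / (1 - ‖b‖ ^ 2) : ℝ) : ℂ) := by
    have : (1 - (‖b‖ : ℂ) ^ 2) ≠ 0 := by exact_mod_cast hsb.ne'
    rw [hψ.deriv, map_neg, neg_mul, Complex.conj_mul', ← sub_eq_add_neg, norm_neg]
    push_cast
    field_simp
    ring
  rw [hderiv, norm_mul, Complex.norm_real, Real.norm_of_nonneg (div_nonneg hsa.le hsb.le),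
    mul_div_assoc', div_le_one hsb] at hschwarz
  linarith

lemma deriv_add_const_mul_eventuallyEq {h g : ℂ → ℂ} {z : ℂ} (ε : ℂ) (hh : AnalyticAt ℂ h z)
    (hg : AnalyticAt ℂ g z) :
    deriv (fun w => h w + ε * g w) =ᶠ[𝓝 z] fun w => deriv h w + ε * deriv g w := by
  filter_upwards [hh.eventually_analyticAt, hg.eventually_analyticAt] with w hhw hgw
  exact (hhw.differentiableAt.hasDerivAt.add (hgw.differentiableAt.hasDerivAt.const_mul ε)).deriv

theorem pd_add_const_mul_sub_PH {h g : ℂ → ℂ} {z ε : ℂ} (hh : AnalyticAt ℂ h z)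
    (hg : AnalyticAt ℂ g z) (hh' : deriv h z ≠ 0) (hω : ‖dil h g z‖ < 1)
    (hε : 1 + ε * dil h g z ≠ 0) :
    pd (fun w => h w + ε * g w) z - PH h g z =
      deriv (dil h g) z * (ε + conj (dil h g z)) /
        ((1 + ε * dil h g z) * ((1 - ‖dil h g z‖ ^ 2 : ℝ) : ℂ)) := by
  have hF := deriv_add_const_mul_eventuallyEq ε hh hg
  have hF'' : deriv (deriv fun w => h w + ε * g w) z =
      deriv (deriv h) z + ε * deriv (deriv g) z := by
    rw [hF.deriv_eq]
    exact (hh.deriv.differentiableAt.hasDerivAt.add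
      (hg.deriv.differentiableAt.hasDerivAt.const_mul ε)).deriv
  have hω' : deriv (dil h g) z =
      (deriv (deriv g) z * deriv h z - deriv g z * deriv (deriv h) z) / deriv h z ^ 2 :=
    (hg.deriv.differentiableAt.hasDerivAt.div hh.deriv.differentiableAt.hasDerivAt hh').deriv
  simp only [pd, PH]
  set ω := dil h g z with hωdef
  set ω' := deriv (dil h g) z
  have hg' : deriv g z = ω * deriv h z := (div_mul_cancel₀ _ hh').symm
  have hg'' : deriv (deriv g) z = ω' * deriv h z + ω * deriv (deriv h) z := by
    rw [hω', hωdef, dil]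
    field_simp
    ring
  have hs : ((1 - ‖ω‖ ^ 2 : ℝ) : ℂ) = 1 - ω * conj ω := by
    push_cast
    rw [Complex.mul_conj']
  have hs' : 1 - ω * conj ω ≠ 0 := by
    rw [← hs]
    exact_mod_cast (by nlinarith [norm_nonneg ω] : (1 - ‖ω‖ ^ 2 : ℝ) ≠ 0)
  rw [hF.eq_of_nhds, hF'', hs, hg'', hg']
  clear_value ω ω'
  field_simp
  ring

lemma SPH.analyticAt_left {h g : ℂ → ℂ} (hf : SPH h g) {z : ℂ} (hz : z ∈ ball (0 : ℂ) 1) :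
    AnalyticAt ℂ h z :=
  hf.1.analyticAt (isOpen_ball.mem_nhds hz)

lemma SPH.analyticAt_right {h g : ℂ → ℂ} (hf : SPH h g) {z : ℂ} (hz : z ∈ ball (0 : ℂ) 1) :
    AnalyticAt ℂ g z :=
  hf.2.1.analyticAt (isOpen_ball.mem_nhds hz)

lemma SPH.deriv_ne_zero {h g : ℂ → ℂ} (hf : SPH h g) {z : ℂ} (hz : z ∈ ball (0 : ℂ) 1) :
    deriv h z ≠ 0 :=
  norm_pos_iff.mp ((norm_nonneg _).trans_lt (hf.2.2.2 z hz))

lemma SPH.mapsTo_dil {h g : ℂ → ℂ} (hf : SPH h g) : MapsTo (dil h g) (ball 0 1) (ball 0 1) := by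
  intro z hz
  rw [mem_ball_zero_iff, dil, norm_div, div_lt_one (norm_pos_iff.mpr (hf.deriv_ne_zero hz))]
  exact hf.2.2.2 z hz

lemma SPH.differentiableOn_dil {h g : ℂ → ℂ} (hf : SPH h g) :
    DifferentiableOn ℂ (dil h g) (ball 0 1) := fun _ hz =>
  ((hf.analyticAt_right hz).deriv.differentiableAt.div
    (hf.analyticAt_left hz).deriv.differentiableAt
    (hf.deriv_ne_zero hz)).differentiableWithinAt

theorem SPH.one_sub_sq_norm_mul_norm_pd_sub_PH_le {h g : ℂ → ℂ} (hf : SPH h g) {ε z : ℂ}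
    (hε : ‖ε‖ ≤ 1) (hz : z ∈ ball (0 : ℂ) 1) :
    (1 - ‖z‖ ^ 2) * ‖pd (fun w => h w + ε * g w) z - PH h g z‖ ≤ 1 := by
  set ω := dil h g z
  have hω : ‖ω‖ < 1 := mem_ball_zero_iff.mp (hf.mapsTo_dil hz)
  have hs : 0 < 1 - ‖ω‖ ^ 2 := by nlinarith [norm_nonneg ω]
  have hεω : 1 + ε * ω ≠ 0 := by
    simpa using one_add_conj_mul_ne_zero (a := conj ε) (by simpa using hε) hω
  have hmob : ‖ε + conj ω‖ ≤ ‖1 + ε * ω‖ := by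
    have e : 1 + conj ε * conj ω = conj (1 + ε * ω) := by simp
    have := norm_add_le_norm_one_add_conj_mul hε (w := conj ω) (by simpa using hω.le)
    rwa [add_comm, e, RCLike.norm_conj] at this
  have hpick :=
    one_sub_sq_norm_mul_norm_deriv_le_of_mapsTo_ball hf.differentiableOn_dil hf.mapsTo_dil hz
  rw [pd_add_const_mul_sub_PH (hf.analyticAt_left hz) (hf.analyticAt_right hz)
    (hf.deriv_ne_zero hz) hω hεω, norm_div, norm_mul, norm_mul, Complex.norm_real,
    Real.norm_of_nonneg hs.le]
  calc (1 - ‖z‖ ^ 2) * (‖deriv (dil h g) z‖ * ‖ε + conj ω‖ / (‖1 + ε * ω‖ * (1 - ‖ω‖ ^ 2)))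
      = (1 - ‖z‖ ^ 2) * ‖deriv (dil h g) z‖ / (1 - ‖ω‖ ^ 2) * (‖ε + conj ω‖ / ‖1 + ε * ω‖) := by
        field_simp
    _ ≤ 1 * 1 := mul_le_mul (div_le_one_of_le₀ hpick hs.le)
        (div_le_one_of_le₀ hmob (norm_nonneg _)) (by positivity) zero_le_one
    _ = 1 := one_mul 1

lemma abs_ciSup_sub_ciSup_le {ι : Type*} [Nonempty ι] {f g : ι → ℝ} {C : ℝ}
    (hg : BddAbove (range g)) (hfg : ∀ i, |f i - g i| ≤ C) :
    |(⨆ i, f i) - ⨆ i, g i| ≤ C := by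
  have hf_le : ∀ i, f i ≤ C + ⨆ i, g i := fun i => by
    linarith [(abs_le.mp (hfg i)).2, le_ciSup hg i]
  have hf : BddAbove (range f) := ⟨_, forall_mem_range.mpr hf_le⟩
  have hg_le : ∀ i, g i ≤ C + ⨆ i, f i := fun i => by
    linarith [(abs_le.mp (hfg i)).1, le_ciSup hf i]
  rw [abs_sub_le_iff, sub_le_iff_le_add, sub_le_iff_le_add]
  exact ⟨ciSup_le hf_le, ciSup_le hg_le⟩

theorem stmt1 (h g : ℂ → ℂ) (hf : SPH h g) :
    (∀ ε : ℂ, ‖ε‖ ≤ 1 → ∀ z ∈ Metric.ball (0 : ℂ) 1,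
        (1 - ‖z‖ ^ 2) * |‖pd (fun w => h w + ε * g w) z‖ - ‖PH h g z‖| ≤ 1) ∧
    (pbdd (PH h g) → ∀ ε : ℂ, ‖ε‖ ≤ 1 →
        |pnorm (pd (fun w => h w + ε * g w)) - pnorm (PH h g)| ≤ 1) := by
  have weight_nonneg : ∀ z ∈ ball (0 : ℂ) 1, 0 ≤ 1 - ‖z‖ ^ 2 := fun z hz => by
    nlinarith [norm_nonneg z, mem_ball_zero_iff.mp hz]
  have pointwise : ∀ ε : ℂ, ‖ε‖ ≤ 1 → ∀ z ∈ ball (0 : ℂ) 1,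
      (1 - ‖z‖ ^ 2) * |‖pd (fun w => h w + ε * g w) z‖ - ‖PH h g z‖| ≤ 1 := fun ε hε z hz =>
    (mul_le_mul_of_nonneg_left (abs_norm_sub_norm_le _ _) (weight_nonneg z hz)).trans
      (hf.one_sub_sq_norm_mul_norm_pd_sub_PH_le hε hz)
  refine ⟨pointwise, fun hbdd ε hε => ?_⟩
  have : Nonempty (ball (0 : ℂ) 1) := ⟨⟨0, mem_ball_self one_pos⟩⟩
  refine abs_ciSup_sub_ciSup_le hbdd fun z => ?_
  rw [← mul_sub, abs_mul, abs_of_nonneg (weight_nonneg z z.2)]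
  exact pointwise ε hε z z.2
end

section
/- For the harmonic Koebe function K = h + conj(g), where h(z) = (z - z²/2 + z³/6)/(1-z)³ and g(z) = (z²/2 + z³/6)/(1-z)³, the pre-Schwarzian derivative of h satisfies P_h(z) = (5+3z)/(1-z²), and the pre-Schwarzian norm ||P_h|| = sup_{z∈D}(1-|z|²)|P_h(z)| equals 8. -/
open Complex Metric

/-!
Differentiating twice gives `h' = (1 + z) / (1 - z) ^ 4` and `h'' = (5 + 3 z) / (1 - z) ^ 5`,
so `P_h = (5 + 3 z) / (1 - z ^ 2)`. Since `1 - |z|² ≤ |1 - z²|`, the weighted quantity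
`(1 - |z|²) |P_h(z)|` is at most `|5 + 3 z| ≤ 8`, while on the segment `[0, 1)` it equals
`5 + 3 r`, which tends to `8`.
-/

theorem hasDerivAt_div_one_sub_pow {𝕜 : Type*} [NontriviallyNormedField 𝕜] {p : 𝕜 → 𝕜}
    {p' z : 𝕜} (hp : HasDerivAt p p' z) (hz : z ≠ 1) (n : ℕ) :
    HasDerivAt (fun w => p w / (1 - w) ^ n) ((p' * (1 - z) + n * p z) / (1 - z) ^ (n + 1)) z := by
  have hz' : (1 : 𝕜) - z ≠ 0 := sub_ne_zero.mpr hz.symm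
  have hq := ((hasDerivAt_id z).const_sub 1).fun_pow n
  refine (hp.div hq (pow_ne_zero n hz')).congr_deriv ?_
  rcases n with _ | n
  · field_simp
    simp
  · simp only [id, Nat.add_sub_cancel]
    field_simp
    ring

theorem one_sub_norm_sq_le_norm_one_sub_sq {𝕜 : Type*} [NormedDivisionRing 𝕜] (z : 𝕜) :
    1 - ‖z‖ ^ 2 ≤ ‖1 - z ^ 2‖ := by
  have := norm_sub_norm_le (1 : 𝕜) (z ^ 2)
  rwa [norm_one, norm_pow] at this

noncomputable def koebeAnalyticPart (w : ℂ) : ℂ := (w - w ^ 2 / 2 + w ^ 3 / 6) / (1 - w) ^ 3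

theorem hasDerivAt_koebeAnalyticPart {z : ℂ} (hz : z ≠ 1) :
    HasDerivAt koebeAnalyticPart ((1 + z) / (1 - z) ^ 4) z := by
  have hp : HasDerivAt (fun w : ℂ => w - w ^ 2 / 2 + w ^ 3 / 6) (1 - z + z ^ 2 / 2) z := by
    refine (((hasDerivAt_id z).sub ((hasDerivAt_pow 2 z).div_const 2)).add
      ((hasDerivAt_pow 3 z).div_const 6)).congr_deriv ?_
    push_cast
    ring
  refine (hasDerivAt_div_one_sub_pow hp hz 3).congr_deriv ?_
  push_cast
  ring

theorem hasDerivAt_deriv_koebeAnalyticPart {z : ℂ} (hz : z ≠ 1) :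
    HasDerivAt (deriv koebeAnalyticPart) ((5 + 3 * z) / (1 - z) ^ 5) z := by
  have hderiv : deriv koebeAnalyticPart =ᶠ[nhds z] fun w => (1 + w) / (1 - w) ^ 4 := by
    filter_upwards [isOpen_ne.mem_nhds hz] with w hw
    exact (hasDerivAt_koebeAnalyticPart hw).deriv
  refine HasDerivAt.congr_of_eventuallyEq ?_ hderiv
  refine (hasDerivAt_div_one_sub_pow ((hasDerivAt_id z).const_add 1) hz 4).congr_deriv ?_
  simp only [id]
  push_cast
  ring

theorem pd_koebeAnalyticPart {z : ℂ} (hz₁ : z ≠ 1) (hz₂ : z ≠ -1) :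
    pd koebeAnalyticPart z = (5 + 3 * z) / (1 - z ^ 2) := by
  have h₁ : (1 : ℂ) - z ≠ 0 := sub_ne_zero.mpr hz₁.symm
  have h₂ : (1 : ℂ) + z ≠ 0 := by
    rwa [add_comm, ← sub_neg_eq_add, sub_ne_zero]
  have h₃ : (1 : ℂ) - z ^ 2 ≠ 0 := by
    rw [show (1 : ℂ) - z ^ 2 = (1 - z) * (1 + z) by ring]
    exact mul_ne_zero h₁ h₂
  rw [pd, (hasDerivAt_koebeAnalyticPart hz₁).deriv, (hasDerivAt_deriv_koebeAnalyticPart hz₁).deriv]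
  field_simp
  ring

theorem one_sub_norm_sq_mul_norm_le_eight {z : ℂ} (hz : ‖z‖ < 1) :
    (1 - ‖z‖ ^ 2) * ‖(5 + 3 * z) / (1 - z ^ 2)‖ ≤ 8 := by
  have hden := one_sub_norm_sq_le_norm_one_sub_sq z
  have hnum : ‖5 + 3 * z‖ ≤ 8 := by
    calc ‖5 + 3 * z‖ ≤ ‖(5 : ℂ)‖ + ‖3 * z‖ := norm_add_le _ _
      _ = 5 + 3 * ‖z‖ := by simp
      _ ≤ 8 := by linarith
  calc (1 - ‖z‖ ^ 2) * ‖(5 + 3 * z) / (1 - z ^ 2)‖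
      = (1 - ‖z‖ ^ 2) / ‖1 - z ^ 2‖ * ‖5 + 3 * z‖ := by rw [norm_div]; ring
    _ ≤ 1 * 8 := by
      gcongr
      exact div_le_one_of_le₀ hden (norm_nonneg _)
    _ = 8 := one_mul 8

theorem one_sub_norm_sq_mul_norm_ofReal {r : ℝ} (hr₀ : 0 ≤ r) (hr₁ : r < 1) :
    (1 - ‖(r : ℂ)‖ ^ 2) * ‖(5 + 3 * (r : ℂ)) / (1 - (r : ℂ) ^ 2)‖ = 5 + 3 * r := by
  have hweight : 0 < 1 - r ^ 2 := by nlinarith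
  have hreal : (5 + 3 * (r : ℂ)) / (1 - (r : ℂ) ^ 2) = ((5 + 3 * r) / (1 - r ^ 2) : ℝ) := by
    push_cast
    rfl
  rw [hreal, norm_real, norm_real, Real.norm_of_nonneg hr₀,
    Real.norm_of_nonneg (by positivity)]
  field_simp

theorem pd_koebeAnalyticPart_of_mem_ball {z : ℂ} (hz : z ∈ ball (0 : ℂ) 1) :
    pd koebeAnalyticPart z = (5 + 3 * z) / (1 - z ^ 2) := by
  rw [mem_ball_zero_iff] at hz
  exact pd_koebeAnalyticPart (by rintro rfl; simp at hz) (by rintro rfl; simp at hz)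

theorem pnorm_pd_koebeAnalyticPart : pnorm (pd koebeAnalyticPart) = 8 := by
  have : Nonempty (ball (0 : ℂ) 1) := ⟨⟨0, mem_ball_self one_pos⟩⟩
  refine ciSup_eq_of_forall_le_of_forall_lt_exists_gt (fun ⟨z, hz⟩ => ?_) (fun b hb => ?_)
  · rw [pd_koebeAnalyticPart_of_mem_ball hz]
    exact one_sub_norm_sq_mul_norm_le_eight (mem_ball_zero_iff.mp hz)
  · obtain ⟨r, hr, hr₁⟩ := exists_between (max_lt (zero_lt_one' ℝ) (by linarith : (b - 5) / 3 < 1))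
    have hr₀ : 0 ≤ r := (le_max_left _ _).trans hr.le
    have hrb : (b - 5) / 3 < r := (le_max_right _ _).trans_lt hr
    have hmem : (r : ℂ) ∈ ball (0 : ℂ) 1 := by
      rwa [mem_ball_zero_iff, norm_real, Real.norm_of_nonneg hr₀]
    refine ⟨⟨r, hmem⟩, ?_⟩
    rw [pd_koebeAnalyticPart_of_mem_ball hmem, one_sub_norm_sq_mul_norm_ofReal hr₀ hr₁]
    linarith

theorem stmt2 :
    (∀ z ∈ Metric.ball (0 : ℂ) 1,
        pd (fun w => (w - w ^ 2 / 2 + w ^ 3 / 6) / (1 - w) ^ 3) z = (5 + 3 * z) / (1 - z ^ 2)) ∧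
    pnorm (pd (fun w => (w - w ^ 2 / 2 + w ^ 3 / 6) / (1 - w) ^ 3)) = 8 :=
  ⟨fun _ hz => pd_koebeAnalyticPart_of_mem_ball hz, pnorm_pd_koebeAnalyticPart⟩
end

section
/- If a, b are real numbers with min{|a|,|b|} + |a-b| ≤ 1, then the function H_{a,b}(z) = ∫₀^z (1+t)^a/(1-t)^b dt satisfies Re(H_{a,b}'(z)·e^{iθ}) > 0 in D for a suitable rotation, i.e. |arg H_{a,b}'(z)| < π/2 for all z ∈ D, and hence H_{a,b} is univalent (injective) in the unit disk. -/
open Complex Metric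

/-!
On the disk, `1 + z`, `1 - z` and `(1 + z) / (1 - z)` all lie in the right half-plane, so with
`α = arg (1 + z)` and `β = arg (1 - z)` both `|β|` and `|α - β|` are below `π / 2`. Since
`(1 + z) ^ a / (1 - z) ^ b` has argument `α a - β b = a (α - β) + (a - b) β` (or symmetrically
`b (β - α) + (b - a) α`), the hypothesis `min |a| |b| + |a - b| ≤ 1` keeps it below `π / 2`
as well. Injectivity is then the Noshiro–Warschawski theorem: on a segment from `x` to `y`,
`t ↦ Re (conj (y - x) * H (x + t (y - x)))` has derivative `|y - x|² Re H' > 0`.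
-/

open Set
open scoped Real

lemma abs_mul_sub_mul_lt_of_abs_add_abs_sub_le_one {a b α β r : ℝ} (hab : |a| + |a - b| ≤ 1)
    (hβ : |β| < r) (hαβ : |α - β| < r) : |α * a - β * b| < r := by
  set M := max |α - β| |β|
  calc |α * a - β * b| = |a * (α - β) + (a - b) * β| := by congr 1; ring
    _ ≤ |a| * |α - β| + |a - b| * |β| := by rw [← abs_mul, ← abs_mul]; exact abs_add_le _ _
    _ ≤ |a| * M + |a - b| * M := by gcongr; exacts [le_max_left _ _, le_max_right _ _]
    _ = (|a| + |a - b|) * M := by ring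
    _ ≤ M := mul_le_of_le_one_left (le_max_of_le_right (abs_nonneg _)) hab
    _ < r := max_lt hαβ hβ

lemma abs_mul_sub_mul_lt_of_min_add_abs_sub_le_one {a b α β r : ℝ}
    (hab : min |a| |b| + |a - b| ≤ 1) (hα : |α| < r) (hβ : |β| < r) (hαβ : |α - β| < r) :
    |α * a - β * b| < r := by
  rcases le_total |a| |b| with h | h
  · exact abs_mul_sub_mul_lt_of_abs_add_abs_sub_le_one (by rwa [min_eq_left h] at hab) hβ hαβ
  · rw [abs_sub_comm]
    rw [min_eq_right h, abs_sub_comm] at hab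
    rw [abs_sub_comm] at hαβ
    exact abs_mul_sub_mul_lt_of_abs_add_abs_sub_le_one hab hα hαβ

namespace Complex

lemma re_exp_pos_of_abs_im_lt {w : ℂ} (h : |w.im| < π / 2) : 0 < (exp w).re := by
  rw [exp_re]
  exact mul_pos (Real.exp_pos _) (Real.cos_pos_of_mem_Ioo (abs_lt.1 h))

variable {z : ℂ}

lemma re_one_add_pos (hz : ‖z‖ < 1) : 0 < (1 + z).re := by
  simp only [add_re, one_re]
  linarith [neg_abs_le z.re, abs_re_le_norm z]

lemma re_one_sub_pos (hz : ‖z‖ < 1) : 0 < (1 - z).re := by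
  simp only [sub_re, one_re]
  linarith [le_abs_self z.re, abs_re_le_norm z]

lemma re_one_add_div_one_sub_pos (hz : ‖z‖ < 1) : 0 < ((1 + z) / (1 - z)).re := by
  have hne : 1 - z ≠ 0 := fun h => by simpa [h] using re_one_sub_pos hz
  have hnum : (1 + z).re * (1 - z).re + (1 + z).im * (1 - z).im = 1 - ‖z‖ ^ 2 := by
    rw [Complex.sq_norm, normSq_apply]
    simp only [add_re, sub_re, add_im, sub_im, one_re, one_im]
    ring
  rw [div_re, ← add_div, hnum]
  exact div_pos (by nlinarith [norm_nonneg z]) (normSq_pos.2 hne)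

lemma abs_arg_one_add_sub_arg_one_sub_lt (hz : ‖z‖ < 1) :
    |arg (1 + z) - arg (1 - z)| < π / 2 := by
  have hq := abs_arg_lt_pi_div_two_iff.2 (Or.inl (re_one_add_div_one_sub_pos hz))
  have hβ := abs_arg_lt_pi_div_two_iff.2 (Or.inl (re_one_sub_pos hz))
  have hne : 1 - z ≠ 0 := fun h => by simpa [h] using re_one_sub_pos hz
  have hq0 : (1 + z) / (1 - z) ≠ 0 :=
    div_ne_zero (fun h => by simpa [h] using re_one_add_pos hz) hne
  have hsum : arg (1 + z) = arg ((1 + z) / (1 - z)) + arg (1 - z) := by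
    have hmem : arg ((1 + z) / (1 - z)) + arg (1 - z) ∈ Ioc (-π) π := by
      constructor <;> linarith [abs_lt.1 hq, abs_lt.1 hβ, Real.pi_pos]
    rw [← arg_mul hq0 hne hmem, div_mul_cancel₀ _ hne]
  rwa [hsum, add_sub_cancel_right]

theorem re_one_add_cpow_div_one_sub_cpow_pos {a b : ℝ} (hab : min |a| |b| + |a - b| ≤ 1)
    (hz : ‖z‖ < 1) : 0 < ((1 + z) ^ (a : ℂ) / (1 - z) ^ (b : ℂ)).re := by
  have hp := re_one_add_pos hz
  have hm := re_one_sub_pos hz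
  have harg : |arg (1 + z) * a - arg (1 - z) * b| < π / 2 :=
    abs_mul_sub_mul_lt_of_min_add_abs_sub_le_one hab
      (abs_arg_lt_pi_div_two_iff.2 (Or.inl hp)) (abs_arg_lt_pi_div_two_iff.2 (Or.inl hm))
      (abs_arg_one_add_sub_arg_one_sub_lt hz)
  rw [cpow_def_of_ne_zero (fun h => by simp [h] at hp),
    cpow_def_of_ne_zero (fun h => by simp [h] at hm), ← exp_sub]
  apply re_exp_pos_of_abs_im_lt
  simpa [log_im] using harg

end Complex

theorem Convex.injOn_of_hasDerivAt_re_pos {U : Set ℂ} (hU : Convex ℝ U) {f f' : ℂ → ℂ}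
    (hf : ∀ z ∈ U, HasDerivAt f (f' z) z) (hf' : ∀ z ∈ U, 0 < (f' z).re) : InjOn f U := by
  intro x hx y hy hxy
  by_contra hne
  set u := y - x
  have hu : u ≠ 0 := sub_ne_zero.2 (Ne.symm hne)
  have hseg : ∀ t ∈ Icc (0 : ℝ) 1, x + t • u ∈ U := fun t ht => hU.add_smul_sub_mem hx hy ht
  set g : ℝ → ℝ := fun t => (starRingEnd ℂ u * f (x + t • u)).re
  have hg : ∀ t ∈ Icc (0 : ℝ) 1,
      HasDerivAt g ((starRingEnd ℂ u * (u * f' (x + t • u))).re) t := by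
    intro t ht
    have hline : HasDerivAt (fun s : ℝ => x + s • u) u t := by
      simpa using ((hasDerivAt_id t).smul_const u).const_add x
    have hcomp := ((hf _ (hseg t ht)).scomp t hline).const_mul (starRingEnd ℂ u)
    simpa [g, Function.comp_def, smul_eq_mul] using reCLM.hasFDerivAt.comp_hasDerivAt t hcomp
  have hmono : StrictMonoOn g (Icc 0 1) := by
    refine strictMonoOn_of_hasDerivWithinAt_pos (convex_Icc 0 1)
      (fun t ht => (hg t ht).continuousAt.continuousWithinAt)
      (fun t ht => (hg t (interior_subset ht)).hasDerivWithinAt) fun t ht => ?_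
    rw [← mul_assoc, conj_mul', ← ofReal_pow, re_ofReal_mul]
    exact mul_pos (pow_pos (norm_pos_iff.2 hu) 2) (hf' _ (hseg t (interior_subset ht)))
  have h01 := hmono (left_mem_Icc.2 zero_le_one) (right_mem_Icc.2 zero_le_one) zero_lt_one
  simp [g, u, hxy] at h01

theorem stmt7 (a b : ℝ) (hab : min |a| |b| + |a - b| ≤ 1) :
    (∀ z ∈ Metric.ball (0 : ℂ) 1,
        |Complex.arg ((1 + z) ^ (a : ℂ) / (1 - z) ^ (b : ℂ))| < Real.pi / 2) ∧
    ∀ H : ℂ → ℂ,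
      (∀ z ∈ Metric.ball (0 : ℂ) 1, HasDerivAt H ((1 + z) ^ (a : ℂ) / (1 - z) ^ (b : ℂ)) z) →
      Set.InjOn H (Metric.ball (0 : ℂ) 1) := by
  have hre : ∀ z ∈ ball (0 : ℂ) 1, 0 < ((1 + z) ^ (a : ℂ) / (1 - z) ^ (b : ℂ)).re :=
    fun z hz => re_one_add_cpow_div_one_sub_cpow_pos hab (mem_ball_zero_iff.1 hz)
  exact ⟨fun z hz => abs_arg_lt_pi_div_two_iff.2 (Or.inl (hre z hz)),
    fun H hH => (convex_ball 0 1).injOn_of_hasDerivAt_re_pos hH hre⟩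
end

section
/- For each real a with -1 < a < 0 and each real θ, the harmonic mapping F_{a,a+1,θ} with analytic part H_{a,a+1} and dilatation e^{iθ}z has pre-Schwarzian norm exactly 1; i.e., sup_{z∈D} |((2a+1)(1-|z|²) + z - conj(z))/(1-z²)| = 1. -/
/-!
Writing `z = x + iy` and `c = 2a + 1`, the numerator is `c (1 - |z|²) + 2iy` and
`|1 - z²|² = (1 - |z|²)² + 4y²`, so the quotient has modulus at most `1` exactly because `c² ≤ 1`.
On the imaginary axis `z = ir` its modulus is at least `2r / (1 + r²)`, which tends to `1` as
`r → 1⁻`.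
-/

open Complex Metric

open Filter Topology ComplexConjugate

theorem normSq_one_sub_sq (z : ℂ) :
    normSq (1 - z ^ 2) = (1 - normSq z) ^ 2 + (2 * z.im) ^ 2 := by
  simp only [normSq_apply, sub_re, sub_im, one_re, one_im, sq, mul_re, mul_im]
  ring

theorem normSq_ofReal_add_sub_conj (x : ℝ) (z : ℂ) :
    normSq (x + z - conj z) = x ^ 2 + (2 * z.im) ^ 2 := by
  rw [add_sub_assoc, sub_conj, normSq_add_mul_I]

theorem im_ofReal_add_sub_conj (x : ℝ) (z : ℂ) : (x + z - conj z).im = 2 * z.im := by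
  simp only [sub_im, add_im, ofReal_im, conj_im]
  ring

theorem norm_ofReal_mul_add_sub_conj_le {c : ℝ} (hc : |c| ≤ 1) (z : ℂ) :
    ‖((c : ℂ) * ((1 - ‖z‖ ^ 2 : ℝ) : ℂ) + z - conj z)‖ ≤ ‖1 - z ^ 2‖ := by
  rw [← sq_le_sq₀ (norm_nonneg _) (norm_nonneg _)]
  simp only [Complex.sq_norm]
  rw [← ofReal_mul, normSq_ofReal_add_sub_conj, normSq_one_sub_sq, mul_pow]
  have : c ^ 2 ≤ 1 := by rwa [← sq_abs, sq_le_one_iff_abs_le_one, abs_abs]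
  nlinarith [sq_nonneg (1 - normSq z)]

theorem norm_div_one_sub_sq_le_one {c : ℝ} (hc : |c| ≤ 1) (z : ℂ) :
    ‖((c : ℂ) * ((1 - ‖z‖ ^ 2 : ℝ) : ℂ) + z - conj z) / (1 - z ^ 2)‖ ≤ 1 := by
  rw [norm_div]
  exact div_le_one_of_le₀ (norm_ofReal_mul_add_sub_conj_le hc z) (norm_nonneg _)

theorem two_mul_div_one_add_sq_le_norm_div_at_mul_I (c r : ℝ) :
    2 * r / (1 + r ^ 2) ≤
      ‖((c : ℂ) * ((1 - ‖(r * I : ℂ)‖ ^ 2 : ℝ) : ℂ) + r * I - conj (r * I)) / (1 - (r * I) ^ 2)‖ := by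
  have hden : (1 : ℂ) - (r * I) ^ 2 = ((1 + r ^ 2 : ℝ) : ℂ) := by
    push_cast; rw [mul_pow, I_sq]; ring
  rw [norm_div, hden, norm_real, Real.norm_of_nonneg (by positivity)]
  gcongr
  have him : ((c : ℂ) * ((1 - ‖(r * I : ℂ)‖ ^ 2 : ℝ) : ℂ) + r * I - conj (r * I)).im = 2 * r := by
    rw [← ofReal_mul, im_ofReal_add_sub_conj]
    simp
  exact him ▸ (le_abs_self _).trans (abs_im_le_norm _)

theorem tendsto_two_mul_div_one_add_sq :
    Tendsto (fun r : ℝ => 2 * r / (1 + r ^ 2)) (𝓝[<] 1) (𝓝 1) := by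
  have : ContinuousAt (fun r : ℝ => 2 * r / (1 + r ^ 2)) 1 := by
    fun_prop (disch := positivity)
  convert this.tendsto.mono_left nhdsWithin_le_nhds using 2
  norm_num

theorem stmt10 (a : ℝ) (h1 : -1 < a) (h2 : a < 0) :
    (⨆ z : Metric.ball (0 : ℂ) 1,
        ‖((((2 * a + 1 : ℝ) : ℂ) * ((1 - ‖(z : ℂ)‖ ^ 2 : ℝ) : ℂ) + (z : ℂ) -
            (starRingEnd ℂ) (z : ℂ)) / (1 - (z : ℂ) ^ 2))‖) = 1 := by
  have hc : |2 * a + 1| ≤ 1 := abs_le.2 ⟨by linarith, by linarith⟩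
  have hle (z : Metric.ball (0 : ℂ) 1) := norm_div_one_sub_sq_le_one hc z
  refine le_antisymm (ciSup_le hle) (le_of_tendsto tendsto_two_mul_div_one_add_sq ?_)
  filter_upwards [Ioo_mem_nhdsLT zero_lt_one] with r hr
  have hrI : (r * I : ℂ) ∈ ball (0 : ℂ) 1 := by
    simpa [abs_of_pos hr.1] using hr.2
  exact (two_mul_div_one_add_sq_le_norm_div_at_mul_I _ r).trans
    (le_ciSup ⟨1, Set.forall_mem_range.2 hle⟩ ⟨_, hrI⟩)
end

section
/- Let f = h + conj(g) be a sense-preserving harmonic mapping in D normalized by h(0)=0, h'(0)=1, g(0)=0, with ||P_f|| ≤ λ and b₁ = g'(0). Then for every z in D, (1-|b₁|²)·((1-|z|)/(1+|z|))^λ ≤ J_f(z) ≤ (1-|b₁|²)·((1+|z|)/(1-|z|))^λ, where J_f = |h'|² - |g'|². -/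
open Complex Metric

/-!
Along the ray `s ↦ s z`, the function `s ↦ log J_f(s z)` has derivative `2 Re (z P_f(s z))`,
because `P_f = ∂ log J_f`. The hypothesis `(1 - |w|²) |P_f(w)| ≤ λ` bounds this derivative by the
derivative of `λ log ((1 + s|z|) / (1 - s|z|))`, so integrating over `s ∈ [0, 1]` gives
`|log J_f(z) - log J_f(0)| ≤ λ log ((1 + |z|) / (1 - |z|))`. Exponentiate and use
`J_f(0) = 1 - |b₁|²`.
-/

theorem norm_sub_le_sub_of_norm_deriv_le {E : Type*} [NormedAddCommGroup E] [NormedSpace ℝ E]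
    {f f' : ℝ → E} {B B' : ℝ → ℝ} {a b : ℝ} (hab : a ≤ b)
    (hf : ∀ x ∈ Set.Icc a b, HasDerivAt f (f' x) x) (hB : ∀ x ∈ Set.Icc a b, HasDerivAt B (B' x) x)
    (bound : ∀ x ∈ Set.Icc a b, ‖f' x‖ ≤ B' x) : ‖f b - f a‖ ≤ B b - B a := by
  have key := image_norm_le_of_norm_deriv_right_le_deriv_boundary' (f := fun x => f x - f a)
    (B := fun x => B x - B a)
    (fun x hx => ((hf x hx).continuousAt.sub continuousAt_const).continuousWithinAt)
    (fun x hx => ((hf x (Set.Ico_subset_Icc_self hx)).sub_const (f a)).hasDerivWithinAt)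
    (by simp)
    (fun x hx => ((hB x hx).continuousAt.sub continuousAt_const).continuousWithinAt)
    (fun x hx => ((hB x (Set.Ico_subset_Icc_self hx)).sub_const (B a)).hasDerivWithinAt)
    (fun x hx => bound x (Set.Ico_subset_Icc_self hx))
  exact key (Set.right_mem_Icc.mpr hab)

theorem hasDerivAt_log_one_add_div_one_sub {x : ℝ} (hx : |x| < 1) :
    HasDerivAt (fun y => Real.log ((1 + y) / (1 - y))) (2 / (1 - x ^ 2)) x := by
  obtain ⟨h1, h2⟩ := abs_lt.mp hx
  have hp : 0 < 1 + x := by linarith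
  have hm : 0 < 1 - x := by linarith
  have hsq : 1 - x ^ 2 ≠ 0 := by nlinarith
  have hquot : HasDerivAt (fun y => (1 + y) / (1 - y)) (2 / (1 - x) ^ 2) x := by
    refine (((hasDerivAt_id' x).const_add 1).fun_div ((hasDerivAt_id' x).const_sub 1)
      hm.ne').congr_deriv ?_
    ring
  convert hquot.log (div_pos hp hm).ne' using 1
  field_simp
  ring

theorem abs_two_re_mul_le {z P : ℂ} {t lam : ℝ} (ht : 0 ≤ t) (htz : t * ‖z‖ < 1)
    (hP : (1 - (t * ‖z‖) ^ 2) * ‖P‖ ≤ lam) :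
    |2 * (z * P).re| ≤ lam * (2 / (1 - (t * ‖z‖) ^ 2) * ‖z‖) := by
  have hden : 0 < 1 - (t * ‖z‖) ^ 2 := by nlinarith [mul_nonneg ht (norm_nonneg z)]
  have hPle : ‖P‖ ≤ lam / (1 - (t * ‖z‖) ^ 2) := by rwa [le_div_iff₀ hden, mul_comm]
  calc |2 * (z * P).re| = 2 * |(z * P).re| := by rw [abs_mul, abs_two]
    _ ≤ 2 * (‖z‖ * ‖P‖) := by gcongr; rw [← norm_mul]; exact Complex.abs_re_le_norm _
    _ ≤ 2 * (‖z‖ * (lam / (1 - (t * ‖z‖) ^ 2))) := by gcongr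
    _ = lam * (2 / (1 - (t * ‖z‖) ^ 2) * ‖z‖) := by ring

theorem mul_inv_rpow_le_and_le_mul_rpow {x y q c : ℝ} (hx : 0 < x) (hy : 0 < y) (hq : 0 < q)
    (h : |Real.log y - Real.log x| ≤ c * Real.log q) : x * q⁻¹ ^ c ≤ y ∧ y ≤ x * q ^ c := by
  obtain ⟨hlo, hhi⟩ := abs_le.mp h
  constructor
  · rw [← Real.log_le_log_iff (by positivity) hy, Real.log_mul hx.ne' (by positivity),
      Real.log_rpow (inv_pos.mpr hq), Real.log_inv]
    linarith
  · rw [← Real.log_le_log_iff hy (by positivity), Real.log_mul hx.ne' (by positivity),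
      Real.log_rpow hq]
    linarith

open ComplexConjugate

-- The right-hand side is `J_f · P_f` at a point where `h' = a`, `g' = b`, `h'' = A`, `g'' = B`.
theorem conj_mul_sub_conj_mul_eq {a b A B : ℂ} (hlt : ‖b‖ < ‖a‖) :
    conj a * A - conj b * B = ((‖a‖ ^ 2 - ‖b‖ ^ 2 : ℝ) : ℂ) *
      (A / a - conj (b / a) * ((B * a - b * A) / a ^ 2) / ((1 - ‖b / a‖ ^ 2 : ℝ) : ℂ)) := by
  have ha : a ≠ 0 := norm_pos_iff.mp ((norm_nonneg b).trans_lt hlt)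
  have hca : conj a ≠ 0 := (map_ne_zero _).mpr ha
  have hJ : conj a * a - conj b * b ≠ 0 := by
    rw [conj_mul', conj_mul']
    exact_mod_cast (sub_pos.mpr (pow_lt_pow_left₀ hlt (norm_nonneg b) two_ne_zero)).ne'
  simp only [norm_div, div_pow, map_div₀]
  push_cast
  rw [← conj_mul', ← conj_mul']
  field_simp
  ring

noncomputable def jac (h g : ℂ → ℂ) (z : ℂ) : ℝ := ‖deriv h z‖ ^ 2 - ‖deriv g z‖ ^ 2

section

variable {h g : ℂ → ℂ} {w z : ℂ}

theorem SPH.differentiableAt_deriv (hf : SPH h g) (hw : w ∈ ball (0 : ℂ) 1) :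
    DifferentiableAt ℂ (deriv h) w ∧ DifferentiableAt ℂ (deriv g) w :=
  ⟨((hf.1.analyticOnNhd isOpen_ball).deriv w hw).differentiableAt,
    ((hf.2.1.analyticOnNhd isOpen_ball).deriv w hw).differentiableAt⟩

theorem jac_pos_of_norm_lt (hlt : ‖deriv g w‖ < ‖deriv h w‖) : 0 < jac h g w :=
  sub_pos.mpr (pow_lt_pow_left₀ hlt (norm_nonneg _) two_ne_zero)

-- The left-hand side is `∂J_f`, so this is `P_f = ∂ log J_f`.
theorem conj_mul_deriv_sub_conj_mul_deriv (hh : DifferentiableAt ℂ (deriv h) w)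
    (hg : DifferentiableAt ℂ (deriv g) w) (hlt : ‖deriv g w‖ < ‖deriv h w‖) :
    conj (deriv h w) * deriv (deriv h) w - conj (deriv g w) * deriv (deriv g) w =
      jac h g w * PH h g w := by
  have ha : deriv h w ≠ 0 := norm_pos_iff.mp ((norm_nonneg _).trans_lt hlt)
  have hdil : HasDerivAt (dil h g)
      ((deriv (deriv g) w * deriv h w - deriv g w * deriv (deriv h) w) / deriv h w ^ 2) w :=
    hg.hasDerivAt.fun_div hh.hasDerivAt ha
  rw [conj_mul_sub_conj_mul_eq hlt, jac, PH, pd, hdil.deriv]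
  rfl

theorem hasDerivAt_jac_comp_ofReal_mul {t : ℝ} (hh : DifferentiableAt ℂ (deriv h) (t * z))
    (hg : DifferentiableAt ℂ (deriv g) (t * z)) (hlt : ‖deriv g (t * z)‖ < ‖deriv h (t * z)‖) :
    HasDerivAt (fun s : ℝ => jac h g (s * z))
      (2 * jac h g (t * z) * (z * PH h g (t * z)).re) t := by
  have hray : HasDerivAt (fun s : ℝ => (s : ℂ) * z) z t := by
    simpa using (hasDerivAt_id t).ofReal_comp.mul_const z
  have hH := (hh.hasDerivAt.comp t hray).norm_sq
  have hG := (hg.hasDerivAt.comp t hray).norm_sq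
  refine (hH.sub hG).congr_deriv ?_
  have key : deriv (deriv h) (t * z) * z * conj (deriv h (t * z))
      - deriv (deriv g) (t * z) * z * conj (deriv g (t * z))
      = jac h g (t * z) * (z * PH h g (t * z)) := by
    linear_combination z * conj_mul_deriv_sub_conj_mul_deriv hh hg hlt
  have key_re := congrArg Complex.re key
  rw [Complex.sub_re, Complex.re_ofReal_mul] at key_re
  simp only [Complex.inner, Function.comp_def]
  linarith

theorem hasDerivAt_log_jac_comp_ofReal_mul {t : ℝ} (hh : DifferentiableAt ℂ (deriv h) (t * z))
    (hg : DifferentiableAt ℂ (deriv g) (t * z)) (hlt : ‖deriv g (t * z)‖ < ‖deriv h (t * z)‖) :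
    HasDerivAt (fun s : ℝ => Real.log (jac h g (s * z))) (2 * (z * PH h g (t * z)).re) t := by
  have hJ := (jac_pos_of_norm_lt hlt).ne'
  refine ((hasDerivAt_jac_comp_ofReal_mul hh hg hlt).log hJ).congr_deriv ?_
  field_simp [hJ]

theorem abs_log_jac_sub_le (hf : SPH h g) {lam : ℝ}
    (hnorm : ∀ w ∈ ball (0 : ℂ) 1, (1 - ‖w‖ ^ 2) * ‖PH h g w‖ ≤ lam) (hz : z ∈ ball (0 : ℂ) 1) :
    |Real.log (jac h g z) - Real.log (jac h g 0)| ≤ lam * Real.log ((1 + ‖z‖) / (1 - ‖z‖)) := by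
  have hr : ‖z‖ < 1 := mem_ball_zero_iff.mp hz
  have hnorm_ray : ∀ t ∈ Set.Icc (0 : ℝ) 1, ‖(t : ℂ) * z‖ = t * ‖z‖ := fun t ht => by
    rw [norm_mul, Complex.norm_real, Real.norm_of_nonneg ht.1]
  have hlt_ray : ∀ t ∈ Set.Icc (0 : ℝ) 1, t * ‖z‖ < 1 := fun t ht =>
    lt_of_le_of_lt (mul_le_of_le_one_left (norm_nonneg z) ht.2) hr
  have hmem_ray : ∀ t ∈ Set.Icc (0 : ℝ) 1, (t : ℂ) * z ∈ ball (0 : ℂ) 1 := fun t ht => by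
    rw [mem_ball_zero_iff, hnorm_ray t ht]; exact hlt_ray t ht
  have hlog := fun t ht => hasDerivAt_log_jac_comp_ofReal_mul (hf.differentiableAt_deriv
    (hmem_ray t ht)).1 (hf.differentiableAt_deriv (hmem_ray t ht)).2 (hf.2.2.2 _ (hmem_ray t ht))
  have hdist : ∀ t ∈ Set.Icc (0 : ℝ) 1, HasDerivAt
      (fun s => lam * Real.log ((1 + s * ‖z‖) / (1 - s * ‖z‖)))
      (lam * (2 / (1 - (t * ‖z‖) ^ 2) * ‖z‖)) t := fun t ht =>
    ((hasDerivAt_log_one_add_div_one_sub (by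
      rw [abs_of_nonneg (mul_nonneg ht.1 (norm_nonneg z))]; exact hlt_ray t ht)).comp t
      (hasDerivAt_mul_const ‖z‖)).const_mul lam
  have hbound : ∀ t ∈ Set.Icc (0 : ℝ) 1,
      ‖2 * (z * PH h g (t * z)).re‖ ≤ lam * (2 / (1 - (t * ‖z‖) ^ 2) * ‖z‖) := fun t ht => by
    have := hnorm _ (hmem_ray t ht)
    rw [hnorm_ray t ht] at this
    exact abs_two_re_mul_le ht.1 (hlt_ray t ht) this
  simpa using norm_sub_le_sub_of_norm_deriv_le zero_le_one hlog hdist hbound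

end

theorem stmt15_general (h g : ℂ → ℂ) (hf : SPH h g) (lam : ℝ)
    (h1 : deriv h 0 = 1)
    (hnorm : ∀ z ∈ Metric.ball (0 : ℂ) 1, (1 - ‖z‖ ^ 2) * ‖PH h g z‖ ≤ lam) :
    ∀ z ∈ Metric.ball (0 : ℂ) 1,
      (1 - ‖deriv g 0‖ ^ 2) * Real.rpow ((1 - ‖z‖) / (1 + ‖z‖)) lam ≤
          ‖deriv h z‖ ^ 2 - ‖deriv g z‖ ^ 2 ∧
        ‖deriv h z‖ ^ 2 - ‖deriv g z‖ ^ 2 ≤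
          (1 - ‖deriv g 0‖ ^ 2) * Real.rpow ((1 + ‖z‖) / (1 - ‖z‖)) lam := by
  intro z hz
  have hr : ‖z‖ < 1 := mem_ball_zero_iff.mp hz
  have hJ0 : jac h g 0 = 1 - ‖deriv g 0‖ ^ 2 := by rw [jac, h1, norm_one, one_pow]
  have hbounds := mul_inv_rpow_le_and_le_mul_rpow
    (jac_pos_of_norm_lt (hf.2.2.2 0 (mem_ball_self one_pos))) (jac_pos_of_norm_lt (hf.2.2.2 z hz))
    (div_pos (by linarith [norm_nonneg z]) (by linarith)) (abs_log_jac_sub_le hf hnorm hz)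
  rwa [hJ0, inv_div] at hbounds

theorem stmt15 (h g : ℂ → ℂ) (hf : SPH h g) (lam : ℝ)
    (h0 : h 0 = 0) (h1 : deriv h 0 = 1)
    (hnorm : ∀ z ∈ Metric.ball (0 : ℂ) 1, (1 - ‖z‖ ^ 2) * ‖PH h g z‖ ≤ lam) :
    ∀ z ∈ Metric.ball (0 : ℂ) 1,
      (1 - ‖deriv g 0‖ ^ 2) * Real.rpow ((1 - ‖z‖) / (1 + ‖z‖)) lam ≤
          ‖deriv h z‖ ^ 2 - ‖deriv g z‖ ^ 2 ∧
        ‖deriv h z‖ ^ 2 - ‖deriv g z‖ ^ 2 ≤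
          (1 - ‖deriv g 0‖ ^ 2) * Real.rpow ((1 + ‖z‖) / (1 - ‖z‖)) lam :=
  stmt15_general h g hf lam h1 hnorm
end

section
/- Let f = h + conj(g) be a sense-preserving harmonic mapping in D normalized (h(0)=0, h'(0)=1, g(0)=0, b₁=g'(0)) with ||P_f|| ≤ λ. Then for all z ∈ D: sqrt(1-|b₁|²)·((1-|z|)/(1+|z|))^{λ/2} ≤ |h'(z)| ≤ (1+|b₁||z|)·(1+|z|)^{(λ-1)/2}/(1-|z|)^{(λ+1)/2}. -/
/-!
Write `ω = g'/h'` and `J = |h'|² (1 - |ω|²)` for the Jacobian of `h + conj g`. The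
pre-Schwarzian `P_f` is exactly `∂ log J`, so along a ray `t ↦ t e` the derivative of `log J` is
`2 Re (e P_f)`, of size at most `2λ/(1 - t²)`; integrating from `0` gives
`|log J(z) - log J(0)| ≤ λ log ((1 + |z|)/(1 - |z|))` with `J(0) = 1 - |b₁|²`. The lower bound
then follows from `|h'|² ≥ J`. For the upper bound, Lindelöf's inequality
`|ω(z)| ≤ (|b₁| + |z|)/(1 + |b₁||z|)` (Schwarz's lemma for `ω` followed by a disc automorphism)
bounds `1 - |ω|²` from below by `(1 - |b₁|²)(1 - |z|²)/(1 + |b₁||z|)²`.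
-/

open Complex Metric

open Set ComplexConjugate

theorem norm_one_sub_conj_mul_sq_sub_norm_sub_sq (a w : ℂ) :
    ‖1 - conj a * w‖ ^ 2 - ‖w - a‖ ^ 2 = (1 - ‖a‖ ^ 2) * (1 - ‖w‖ ^ 2) := by
  simp only [← Complex.normSq_eq_norm_sq, normSq_apply, sub_re, sub_im, mul_re, mul_im, one_re,
    one_im, conj_re, conj_im]
  ring

theorem norm_sub_lt_norm_one_sub_conj_mul {a w : ℂ} (ha : ‖a‖ < 1) (hw : ‖w‖ < 1) :
    ‖w - a‖ < ‖1 - conj a * w‖ := by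
  have hpos : 0 < (1 - ‖a‖ ^ 2) * (1 - ‖w‖ ^ 2) := by
    have := norm_nonneg a; have := norm_nonneg w
    apply mul_pos <;> nlinarith
  rw [← norm_one_sub_conj_mul_sq_sub_norm_sub_sq, sub_pos] at hpos
  exact lt_of_pow_lt_pow_left₀ 2 (norm_nonneg _) hpos

theorem norm_mul_one_add_le_of_mapsTo_ball {F : ℂ → ℂ} (hd : DifferentiableOn ℂ F (ball 0 1))
    (hF : MapsTo F (ball 0 1) (ball 0 1)) {z : ℂ} (hz : z ∈ ball (0 : ℂ) 1) :
    ‖F z‖ * (1 + ‖F 0‖ * ‖z‖) ≤ ‖F 0‖ + ‖z‖ := by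
  set a := F 0
  have ha : ‖a‖ < 1 := mem_ball_zero_iff.1 (hF (mem_ball_self one_pos))
  have hlt : ∀ w ∈ ball (0 : ℂ) 1, ‖F w - a‖ < ‖1 - conj a * F w‖ := fun w hw =>
    norm_sub_lt_norm_one_sub_conj_mul ha (mem_ball_zero_iff.1 (hF hw))
  have hden : ∀ w ∈ ball (0 : ℂ) 1, 1 - conj a * F w ≠ 0 := fun w hw =>
    norm_pos_iff.1 ((norm_nonneg _).trans_lt (hlt w hw))
  -- Schwarz's lemma, applied to `F` followed by the disc automorphism sending `F 0` to `0`
  have hschwarz : ‖(F z - a) / (1 - conj a * F z)‖ ≤ ‖z‖ :=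
    norm_le_norm_of_mapsTo_ball (f := fun w => (F w - a) / (1 - conj a * F w))
      ((hd.sub_const a).div ((differentiableOn_const 1).sub (hd.const_mul _)) hden)
      (fun w hw => mem_closedBall_zero_iff.2 <| by
        rw [norm_div, div_le_one (norm_pos_iff.2 (hden w hw))]; exact (hlt w hw).le)
      (by simp [a]) (mem_ball_zero_iff.1 hz)
  rw [norm_div, div_le_iff₀ (norm_pos_iff.2 (hden z hz))] at hschwarz
  have hid := norm_one_sub_conj_mul_sq_sub_norm_sub_sq a (F z)
  have hden_ge : 1 - ‖a‖ * ‖F z‖ ≤ ‖1 - conj a * F z‖ := by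
    simpa [norm_mul] using norm_sub_norm_le (1 : ℂ) (conj a * F z)
  set s := ‖F z‖
  set b := ‖a‖
  set t := ‖z‖
  set d := ‖1 - conj a * F z‖
  have hs : s < 1 := mem_ball_zero_iff.1 (hF hz)
  have ht : t < 1 := mem_ball_zero_iff.1 hz
  have hbs : 0 ≤ 1 - b * s := by nlinarith [norm_nonneg a, norm_nonneg (F z)]
  -- `(1 - b s)² - (s - b)² = (1 - b²)(1 - s²) = d² - ‖F z - a‖² ≥ (1 - t²) d²`
  have hsq : (s - b) ^ 2 ≤ (t * (1 - b * s)) ^ 2 := by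
    have h1 : (1 - t ^ 2) * (1 - b * s) ^ 2 ≤ (1 - t ^ 2) * d ^ 2 :=
      mul_le_mul_of_nonneg_left (pow_le_pow_left₀ hbs hden_ge 2) (by nlinarith [norm_nonneg z])
    have h2 : ‖F z - a‖ ^ 2 ≤ (t * d) ^ 2 := pow_le_pow_left₀ (norm_nonneg _) hschwarz 2
    nlinarith
  have := le_of_sq_le_sq hsq (mul_nonneg (norm_nonneg z) hbs)
  linarith

theorem HasDerivAt.log_norm_sq {f : ℝ → ℂ} {f' : ℂ} {t : ℝ} (hf : HasDerivAt f f' t)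
    (h0 : f t ≠ 0) :
    HasDerivAt (fun s => Real.log (‖f s‖ ^ 2)) (2 * (f' / f t).re) t := by
  refine (hf.norm_sq.log (by positivity)).congr_deriv ?_
  rw [Complex.inner, Complex.div_re, ← Complex.normSq_eq_norm_sq]
  simp only [mul_re, conj_re, conj_im]
  ring

theorem HasDerivAt.log_one_sub_norm_sq {f : ℝ → ℂ} {f' : ℂ} {t : ℝ} (hf : HasDerivAt f f' t)
    (h1 : ‖f t‖ < 1) :
    HasDerivAt (fun s => Real.log (1 - ‖f s‖ ^ 2)) (-2 * (conj (f t) * f').re / (1 - ‖f t‖ ^ 2))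
      t := by
  have hpos : 0 < 1 - ‖f t‖ ^ 2 := by nlinarith [norm_nonneg (f t)]
  refine ((hf.norm_sq.const_sub 1).log hpos.ne').congr_deriv ?_
  rw [Complex.inner, mul_comm f']
  ring

/-- Logarithm of the Jacobian `|h'|² - |g'|² = |h'|² (1 - |dil h g|²)` of `h + conj g`. -/
noncomputable def logJac (h g : ℂ → ℂ) (z : ℂ) : ℝ :=
  Real.log (‖deriv h z‖ ^ 2) + Real.log (1 - ‖dil h g z‖ ^ 2)

theorem hasDerivAt_logJac_comp {h g : ℂ → ℂ} {γ : ℝ → ℂ} {γ' : ℂ} {t : ℝ}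
    (hγ : HasDerivAt γ γ' t) (hh : DifferentiableAt ℂ (deriv h) (γ t))
    (hω : DifferentiableAt ℂ (dil h g) (γ t)) (hne : deriv h (γ t) ≠ 0)
    (hlt : ‖dil h g (γ t)‖ < 1) :
    HasDerivAt (fun s => logJac h g (γ s)) (2 * (γ' * PH h g (γ t)).re) t := by
  refine (((hh.hasDerivAt.comp t hγ).log_norm_sq hne).add
    ((hω.hasDerivAt.comp t hγ).log_one_sub_norm_sq hlt)).congr_deriv ?_
  rw [show γ' * PH h g (γ t) = deriv (deriv h) (γ t) * γ' / deriv h (γ t) -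
      conj (dil h g (γ t)) * (deriv (dil h g) (γ t) * γ') / ((1 - ‖dil h g (γ t)‖ ^ 2 : ℝ) : ℂ) by
    rw [PH, pd]; ring, sub_re, div_ofReal_re]
  simp only [Function.comp_apply]
  ring

theorem abs_sub_le_mul_log_of_abs_deriv_le {u u' : ℝ → ℝ} {lam r : ℝ} (hr : r ∈ Ico (0 : ℝ) 1)
    (hu : ∀ t ∈ Icc 0 r, HasDerivAt u (u' t) t)
    (hbound : ∀ t ∈ Icc 0 r, |u' t| ≤ 2 * lam / (1 - t ^ 2)) :
    |u r - u 0| ≤ lam * Real.log ((1 + r) / (1 - r)) := by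
  have hB : ∀ t ∈ Icc 0 r, HasDerivAt (fun t => lam * (Real.log (1 + t) - Real.log (1 - t)))
      (2 * lam / (1 - t ^ 2)) t := by
    intro t ht
    have h1 : 0 < 1 + t := by linarith [ht.1]
    have h2 : 0 < 1 - t := by linarith [ht.2, hr.2]
    refine ((((hasDerivAt_id t).const_add 1).log h1.ne').sub
      (((hasDerivAt_id t).const_sub 1).log h2.ne')).const_mul lam |>.congr_deriv ?_
    have h3 : 1 - t ^ 2 = (1 + t) * (1 - t) := by ring
    simp only [id, h3]
    field_simp
    ring
  have key := image_norm_le_of_norm_deriv_right_le_deriv_boundary' (a := 0) (b := r)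
    (f := fun t => u t - u 0) (B := fun t => lam * (Real.log (1 + t) - Real.log (1 - t)))
    (fun t ht => ((hu t ht).sub_const (u 0)).continuousAt.continuousWithinAt)
    (fun t ht => ((hu t (Ico_subset_Icc_self ht)).sub_const (u 0)).hasDerivWithinAt)
    (by simp) (fun t ht => (hB t ht).continuousAt.continuousWithinAt)
    (fun t ht => (hB t (Ico_subset_Icc_self ht)).hasDerivWithinAt)
    (fun t ht => hbound t (Ico_subset_Icc_self ht))
    (right_mem_Icc.2 hr.1)
  rwa [Real.log_div (by linarith [hr.1]) (by linarith [hr.2])]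

theorem le_and_le_of_abs_log_sub_le {J J₀ x c : ℝ} (hJ : 0 < J) (hJ₀ : 0 < J₀) (hx : 0 < x)
    (h : |Real.log J - Real.log J₀| ≤ c * Real.log x) :
    J₀ * x⁻¹ ^ c ≤ J ∧ J ≤ J₀ * x ^ c := by
  rw [abs_le] at h
  constructor
  · rw [← Real.log_le_log_iff (by positivity) hJ, Real.log_mul hJ₀.ne' (by positivity),
      Real.log_rpow (inv_pos.2 hx), Real.log_inv]
    linarith
  · rw [← Real.log_le_log_iff hJ (by positivity), Real.log_mul hJ₀.ne' (by positivity),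
      Real.log_rpow hx]
    linarith

namespace SPH

variable {h g : ℂ → ℂ} {z : ℂ}

theorem dil_zero (h1 : deriv h 0 = 1) : dil h g 0 = deriv g 0 := by
  rw [dil, h1, div_one]

theorem deriv_ne_zero_s16 (hf : SPH h g) (hz : z ∈ ball (0 : ℂ) 1) : deriv h z ≠ 0 :=
  norm_pos_iff.1 ((norm_nonneg _).trans_lt (hf.2.2.2 z hz))

theorem norm_dil_lt_one (hf : SPH h g) (hz : z ∈ ball (0 : ℂ) 1) : ‖dil h g z‖ < 1 := by
  rw [dil, norm_div, div_lt_one (norm_pos_iff.2 (hf.deriv_ne_zero_s16 hz))]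
  exact hf.2.2.2 z hz

theorem differentiableAt_deriv_s16 (hf : SPH h g) (hz : z ∈ ball (0 : ℂ) 1) :
    DifferentiableAt ℂ (deriv h) z :=
  ((hf.1.analyticOnNhd isOpen_ball).deriv z hz).differentiableAt

theorem differentiableAt_dil (hf : SPH h g) (hz : z ∈ ball (0 : ℂ) 1) :
    DifferentiableAt ℂ (dil h g) z :=
  (((hf.2.1.analyticOnNhd isOpen_ball).deriv z hz).differentiableAt).div
    (hf.differentiableAt_deriv_s16 hz) (hf.deriv_ne_zero_s16 hz)

theorem abs_logJac_sub_le {lam : ℝ} (hf : SPH h g)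
    (hnorm : ∀ z ∈ ball (0 : ℂ) 1, (1 - ‖z‖ ^ 2) * ‖PH h g z‖ ≤ lam) (hz : z ∈ ball (0 : ℂ) 1) :
    |logJac h g z - logJac h g 0| ≤ lam * Real.log ((1 + ‖z‖) / (1 - ‖z‖)) := by
  rcases eq_or_ne z 0 with rfl | hz0
  · simp
  set e : ℂ := z / ‖z‖
  have he : ‖e‖ = 1 := by simp [e, hz0]
  have hray : ∀ t : ℝ, HasDerivAt (fun s : ℝ => (s : ℂ) * e) e t := fun t => by
    simpa using (hasDerivAt_id t).ofReal_comp.mul_const e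
  have hnorm_ray : ∀ t ∈ Icc (0 : ℝ) ‖z‖, ‖(t : ℂ) * e‖ = t := fun t ht => by
    rw [norm_mul, he, mul_one, norm_real, Real.norm_of_nonneg ht.1]
  have hmem : ∀ t ∈ Icc (0 : ℝ) ‖z‖, (t : ℂ) * e ∈ ball (0 : ℂ) 1 := fun t ht => by
    rw [mem_ball_zero_iff, hnorm_ray t ht]
    exact ht.2.trans_lt (mem_ball_zero_iff.1 hz)
  have key := abs_sub_le_mul_log_of_abs_deriv_le (u := fun t => logJac h g ((t : ℂ) * e))
    ⟨norm_nonneg z, mem_ball_zero_iff.1 hz⟩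
    (fun t ht => hasDerivAt_logJac_comp (hray t) (hf.differentiableAt_deriv_s16 (hmem t ht))
      (hf.differentiableAt_dil (hmem t ht)) (hf.deriv_ne_zero_s16 (hmem t ht))
      (hf.norm_dil_lt_one (hmem t ht)))
    (fun t ht => by
      have ht1 : 0 < 1 - t ^ 2 := by
        have := hnorm_ray t ht ▸ mem_ball_zero_iff.1 (hmem t ht)
        nlinarith [ht.1]
      have hPH := hnorm _ (hmem t ht)
      rw [hnorm_ray t ht] at hPH
      calc |2 * (e * PH h g (t * e)).re| ≤ 2 * ‖e * PH h g (t * e)‖ := by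
            rw [abs_mul, abs_two]; gcongr; exact abs_re_le_norm _
        _ = 2 * ‖PH h g (t * e)‖ := by rw [norm_mul, he, one_mul]
        _ ≤ 2 * lam / (1 - t ^ 2) := by
            rw [mul_div_assoc]; gcongr; rwa [le_div_iff₀' ht1])
  simpa [e, mul_div_cancel₀ _ (ofReal_ne_zero.2 (norm_ne_zero_iff.2 hz0))] using key

theorem jacobian_bounds {lam : ℝ} (hf : SPH h g) (h1 : deriv h 0 = 1)
    (hnorm : ∀ z ∈ ball (0 : ℂ) 1, (1 - ‖z‖ ^ 2) * ‖PH h g z‖ ≤ lam) (hz : z ∈ ball (0 : ℂ) 1) :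
    (1 - ‖deriv g 0‖ ^ 2) * ((1 - ‖z‖) / (1 + ‖z‖)) ^ lam ≤
        ‖deriv h z‖ ^ 2 * (1 - ‖dil h g z‖ ^ 2) ∧
      ‖deriv h z‖ ^ 2 * (1 - ‖dil h g z‖ ^ 2) ≤
        (1 - ‖deriv g 0‖ ^ 2) * ((1 + ‖z‖) / (1 - ‖z‖)) ^ lam := by
  have hb : ‖deriv g 0‖ < 1 := dil_zero h1 ▸ hf.norm_dil_lt_one (mem_ball_self one_pos)
  have hr : ‖z‖ < 1 := mem_ball_zero_iff.1 hz
  have hne := hf.deriv_ne_zero_s16 hz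
  have hs : 0 < 1 - ‖dil h g z‖ ^ 2 := by nlinarith [hf.norm_dil_lt_one hz, norm_nonneg (dil h g z)]
  have hlogJ := hf.abs_logJac_sub_le hnorm hz
  rw [logJac, logJac, dil_zero h1, h1, norm_one, one_pow, Real.log_one, zero_add,
    ← Real.log_mul (by simpa using hne) hs.ne'] at hlogJ
  rw [← inv_div]
  exact le_and_le_of_abs_log_sub_le (by positivity) (by nlinarith [norm_nonneg (deriv g 0)])
    (by have := norm_nonneg z; exact div_pos (by linarith) (by linarith)) hlogJ

end SPH

theorem sqrt_mul_rpow_half_le {A s c y lam : ℝ} (hA : 0 ≤ A) (hc : 0 ≤ c) (hy : 0 ≤ y)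
    (h : c * y ^ lam ≤ A ^ 2 * (1 - s ^ 2)) : √c * y ^ (lam / 2) ≤ A := by
  refine le_of_sq_le_sq ?_ hA
  rw [mul_pow, Real.sq_sqrt hc, ← Real.rpow_mul_natCast hy, Nat.cast_two,
    div_mul_cancel₀ _ two_ne_zero]
  nlinarith [sq_nonneg s, sq_nonneg A]

theorem le_rpow_of_jacobian_le {A s b r lam : ℝ} (hs : 0 ≤ s) (hb : b ∈ Ico (0 : ℝ) 1)
    (hr : r ∈ Ico (0 : ℝ) 1) (hJ : A ^ 2 * (1 - s ^ 2) ≤ (1 - b ^ 2) * ((1 + r) / (1 - r)) ^ lam)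
    (hL : s * (1 + b * r) ≤ b + r) :
    A ≤ (1 + b * r) * (1 + r) ^ ((lam - 1) / 2) / (1 - r) ^ ((lam + 1) / 2) := by
  obtain ⟨hb0, hb1⟩ := hb
  obtain ⟨hr0, hr1⟩ := hr
  -- `(1 + b r)² - (b + r)² = (1 - b²)(1 - r²)`
  have hdil : (1 - b ^ 2) * (1 - r ^ 2) ≤ (1 - s ^ 2) * (1 + b * r) ^ 2 := by
    nlinarith [mul_self_le_mul_self (by positivity) hL]
  have hA2 : A ^ 2 * (1 - r ^ 2) ≤ (1 + b * r) ^ 2 * ((1 + r) / (1 - r)) ^ lam := by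
    have hb2 : 0 < 1 - b ^ 2 := by nlinarith
    refine le_of_mul_le_mul_left ?_ hb2
    calc (1 - b ^ 2) * (A ^ 2 * (1 - r ^ 2)) = A ^ 2 * ((1 - b ^ 2) * (1 - r ^ 2)) := by ring
      _ ≤ A ^ 2 * (1 - s ^ 2) * (1 + b * r) ^ 2 := by
          rw [mul_assoc]; exact mul_le_mul_of_nonneg_left hdil (sq_nonneg A)
      _ ≤ (1 - b ^ 2) * ((1 + r) / (1 - r)) ^ lam * (1 + b * r) ^ 2 := by gcongr
      _ = (1 - b ^ 2) * ((1 + b * r) ^ 2 * ((1 + r) / (1 - r)) ^ lam) := by ring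
  have hsq : ((1 + b * r) * (1 + r) ^ ((lam - 1) / 2) / (1 - r) ^ ((lam + 1) / 2)) ^ 2 *
      (1 - r ^ 2) = (1 + b * r) ^ 2 * ((1 + r) / (1 - r)) ^ lam := by
    have h1 : 0 < 1 + r := by linarith
    have h2 : 0 < 1 - r := by linarith
    rw [div_pow, mul_pow, ← Real.rpow_mul_natCast h1.le, ← Real.rpow_mul_natCast h2.le,
      Nat.cast_two, div_mul_cancel₀ _ two_ne_zero, div_mul_cancel₀ _ two_ne_zero,
      Real.rpow_sub_one h1.ne', Real.rpow_add_one h2.ne', Real.div_rpow h1.le h2.le]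
    have : 0 < (1 - r) ^ lam := by positivity
    field_simp
    ring
  refine le_of_sq_le_sq (le_of_mul_le_mul_right (hA2.trans_eq hsq.symm) (by nlinarith)) ?_
  have : 0 ≤ 1 + r := by linarith
  have : 0 ≤ 1 - r := by linarith
  positivity

theorem stmt16_general (h g : ℂ → ℂ) (hf : SPH h g) (lam : ℝ)
    (h1 : deriv h 0 = 1)
    (hnorm : ∀ z ∈ Metric.ball (0 : ℂ) 1, (1 - ‖z‖ ^ 2) * ‖PH h g z‖ ≤ lam) :
    ∀ z ∈ Metric.ball (0 : ℂ) 1,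
      Real.sqrt (1 - ‖deriv g 0‖ ^ 2) * Real.rpow ((1 - ‖z‖) / (1 + ‖z‖)) (lam / 2) ≤
          ‖deriv h z‖ ∧
        ‖deriv h z‖ ≤ (1 + ‖deriv g 0‖ * ‖z‖) *
          Real.rpow (1 + ‖z‖) ((lam - 1) / 2) / Real.rpow (1 - ‖z‖) ((lam + 1) / 2) := by
  have hb : ‖deriv g 0‖ < 1 := SPH.dil_zero h1 ▸ hf.norm_dil_lt_one (mem_ball_self one_pos)
  intro z hz
  have hr : ‖z‖ < 1 := mem_ball_zero_iff.1 hz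
  have hJ := hf.jacobian_bounds h1 hnorm hz
  have hL := norm_mul_one_add_le_of_mapsTo_ball
    (fun w hw => (hf.differentiableAt_dil hw).differentiableWithinAt)
    (fun w hw => mem_ball_zero_iff.2 (hf.norm_dil_lt_one hw)) hz
  rw [SPH.dil_zero h1] at hL
  exact ⟨sqrt_mul_rpow_half_le (norm_nonneg _) (by nlinarith [norm_nonneg (deriv g 0)])
      (div_nonneg (by linarith) (by positivity)) hJ.1,
    le_rpow_of_jacobian_le (norm_nonneg _) ⟨norm_nonneg _, hb⟩ ⟨norm_nonneg _, hr⟩ hJ.2 hL⟩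

theorem stmt16 (h g : ℂ → ℂ) (hf : SPH h g) (lam : ℝ)
    (h0 : h 0 = 0) (h1 : deriv h 0 = 1)
    (hnorm : ∀ z ∈ Metric.ball (0 : ℂ) 1, (1 - ‖z‖ ^ 2) * ‖PH h g z‖ ≤ lam) :
    ∀ z ∈ Metric.ball (0 : ℂ) 1,
      Real.sqrt (1 - ‖deriv g 0‖ ^ 2) * Real.rpow ((1 - ‖z‖) / (1 + ‖z‖)) (lam / 2) ≤
          ‖deriv h z‖ ∧
        ‖deriv h z‖ ≤ (1 + ‖deriv g 0‖ * ‖z‖) *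
          Real.rpow (1 + ‖z‖) ((lam - 1) / 2) / Real.rpow (1 - ‖z‖) ((lam + 1) / 2) :=
  stmt16_general h g hf lam h1 hnorm
end
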